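/- arXiv:2105.05963 — 6 statements merged into one kernel-verified Lean document; each statement's English description precedes it below -/
import Mathlib

section
/- For α > 0 and probability densities f, g on ℝ (with respect to μ) with finite integrals ∫f^{α+1}, ∫g^{α+1}, the quantity log ∫ f^{α+1} − ((1+α)/α) log ∫ f^α g + (1/α) log ∫ g^{α+1} is nonnegative, and equals zero if and only if f = g almost everywhere. -/
/-!
Put `p = (α + 1) / α`, `q = α + 1` and normalise `u = f ^ (α + 1) / ∫ f ^ (α + 1)`,
`v = g ^ (α + 1) / ∫ g ^ (α + 1)`. Then `u ^ (1/p) * v ^ (1/q)` is `f ^ α * g` up to a constant,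
and the divergence equals `-p * log I` with `I = ∫ u ^ (1/p) * v ^ (1/q)`. Integrating the weighted
AM–GM inequality `u ^ (1/p) * v ^ (1/q) ≤ u / p + v / q` gives `I ≤ 1` (Hölder's inequality),
with equality iff `u = v` a.e. Finally `u = v` a.e. makes `f` a constant multiple of `g`, and the
constant is `1` because both integrate to `1`.
-/

open MeasureTheory Real

theorem rpow_div_rpow_mul_rpow_div_rpow {α x y a c : ℝ} (hα : α + 1 ≠ 0) (hx : 0 ≤ x)
    (hy : 0 ≤ y) (ha : 0 ≤ a) (hc : 0 ≤ c) :
    (x ^ (α + 1) / a) ^ (α / (α + 1)) * (y ^ (α + 1) / c) ^ (1 / (α + 1)) =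
      x ^ α * y / (a ^ (α / (α + 1)) * c ^ (1 / (α + 1))) := by
  rw [div_rpow (rpow_nonneg hx _) ha, div_rpow (rpow_nonneg hy _) hc, ← rpow_mul hx,
    ← rpow_mul hy, mul_div_cancel₀ _ hα, mul_one_div_cancel hα, rpow_one, div_mul_div_comm]

theorem log_sub_mul_log_add_mul_log_eq {α a b c : ℝ} (hα : 0 < α) (ha : 0 < a) (hb : 0 < b)
    (hc : 0 < c) :
    log a - (1 + α) / α * log b + 1 / α * log c =
      -((1 + α) / α) * log (b / (a ^ (α / (α + 1)) * c ^ (1 / (α + 1)))) := by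
  have hα1 : α + 1 ≠ 0 := by positivity
  rw [log_div hb.ne' (by positivity), log_mul (by positivity) (by positivity), log_rpow ha,
    log_rpow hc]
  field_simp
  ring

section

variable {Ω : Type*} [MeasurableSpace Ω] {μ : Measure Ω}

section WeightedMean

variable {u v : Ω → ℝ} {w₁ w₂ : ℝ}

theorem rpow_mul_rpow_ae_le (hw₁ : 0 ≤ w₁) (hw₂ : 0 ≤ w₂) (hw : w₁ + w₂ = 1)
    (hu0 : 0 ≤ᵐ[μ] u) (hv0 : 0 ≤ᵐ[μ] v) :
    (fun x => u x ^ w₁ * v x ^ w₂) ≤ᵐ[μ] fun x => w₁ * u x + w₂ * v x := by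
  filter_upwards [hu0, hv0] with x hux hvx
  exact geom_mean_le_arith_mean2_weighted hw₁ hw₂ hux hvx hw

theorem integral_rpow_mul_rpow_le (hw₁ : 0 ≤ w₁) (hw₂ : 0 ≤ w₂) (hw : w₁ + w₂ = 1)
    (hu0 : 0 ≤ᵐ[μ] u) (hv0 : 0 ≤ᵐ[μ] v) (hu : Integrable u μ) (hv : Integrable v μ) :
    ∫ x, u x ^ w₁ * v x ^ w₂ ∂μ ≤ w₁ * ∫ x, u x ∂μ + w₂ * ∫ x, v x ∂μ := by
  rw [← integral_const_mul, ← integral_const_mul, ← integral_add (hu.const_mul _) (hv.const_mul _)]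
  refine integral_mono_of_nonneg ?_ ((hu.const_mul _).add (hv.const_mul _))
    (rpow_mul_rpow_ae_le hw₁ hw₂ hw hu0 hv0)
  filter_upwards [hu0, hv0] with x hux hvx
  exact mul_nonneg (rpow_nonneg hux _) (rpow_nonneg hvx _)

theorem integral_rpow_mul_rpow_eq_iff (hw₁ : 0 < w₁) (hw₂ : 0 < w₂) (hw : w₁ + w₂ = 1)
    (hu0 : 0 ≤ᵐ[μ] u) (hv0 : 0 ≤ᵐ[μ] v) (hu : Integrable u μ) (hv : Integrable v μ)
    (huv : Integrable (fun x => u x ^ w₁ * v x ^ w₂) μ) :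
    ∫ x, u x ^ w₁ * v x ^ w₂ ∂μ = w₁ * ∫ x, u x ∂μ + w₂ * ∫ x, v x ∂μ ↔ u =ᵐ[μ] v := by
  have hmean : Integrable (fun x => w₁ * u x + w₂ * v x) μ :=
    (hu.const_mul _).add (hv.const_mul _)
  rw [← integral_const_mul, ← integral_const_mul, ← integral_add (hu.const_mul _) (hv.const_mul _),
    integral_eq_iff_of_ae_le huv hmean (rpow_mul_rpow_ae_le hw₁.le hw₂.le hw hu0 hv0)]
  constructor <;> intro h <;> filter_upwards [h, hu0, hv0] with x hx hux hvx
  · exact (geom_mean_eq_arith_mean2_weighted_iff_of_pos hw₁ hw₂ hux hvx hw).1 hx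
  · exact (geom_mean_eq_arith_mean2_weighted_iff_of_pos hw₁ hw₂ hux hvx hw).2 hx

end WeightedMean

variable {f g : Ω → ℝ}

theorem ae_eq_of_ae_eq_const_mul_of_integral_eq {c : ℝ} (h : f =ᵐ[μ] fun x => c * g x)
    (hint : ∫ x, f x ∂μ = ∫ x, g x ∂μ) (hg : ∫ x, g x ∂μ ≠ 0) : f =ᵐ[μ] g := by
  have hc : c = 1 := by
    rw [integral_congr_ae h, integral_const_mul] at hint
    exact (mul_eq_right₀ hg).1 hint
  simpa [hc] using h

theorem rpow_div_integral_ae_eq_iff {r : ℝ} (hf0 : 0 ≤ᵐ[μ] f) (hg0 : 0 ≤ᵐ[μ] g) (hr : r ≠ 0)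
    (hfr : 0 < ∫ x, f x ^ r ∂μ) (hgr : 0 < ∫ x, g x ^ r ∂μ)
    (hint : ∫ x, f x ∂μ = ∫ x, g x ∂μ) (hg : ∫ x, g x ∂μ ≠ 0) :
    (fun x => f x ^ r / ∫ y, f y ^ r ∂μ) =ᵐ[μ] (fun x => g x ^ r / ∫ y, g y ^ r ∂μ) ↔
      f =ᵐ[μ] g := by
  set a := ∫ y, f y ^ r ∂μ
  set b := ∫ y, g y ^ r ∂μ
  refine ⟨fun h => ae_eq_of_ae_eq_const_mul_of_integral_eq (c := (a / b) ^ r⁻¹) ?_ hint hg,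
    fun h => ?_⟩
  · filter_upwards [h, hf0, hg0] with x hx hfx hgx
    have hpow : f x ^ r = a / b * g x ^ r := by
      field_simp at hx ⊢
      linarith
    calc f x = (f x ^ r) ^ r⁻¹ := (rpow_rpow_inv hfx hr).symm
      _ = (a / b) ^ r⁻¹ * (g x ^ r) ^ r⁻¹ := by
        rw [hpow, mul_rpow (div_pos hfr hgr).le (rpow_nonneg hgx r)]
      _ = (a / b) ^ r⁻¹ * g x := by rw [rpow_rpow_inv hgx hr]
  · have hab : a = b := integral_congr_ae (h.fun_comp (· ^ r))
    filter_upwards [h] with x hx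
    rw [hx, hab]

theorem integral_rpow_mul_div_le_one_and_eq_one_iff {α : ℝ} (hα : 0 < α)
    (hf0 : ∀ x, 0 ≤ f x) (hg0 : ∀ x, 0 ≤ g x) (hint : ∫ x, f x ∂μ = ∫ x, g x ∂μ)
    (hg : ∫ x, g x ∂μ ≠ 0) (hfg : Integrable (fun x => f x ^ α * g x) μ)
    (hf1 : Integrable (fun x => f x ^ (α + 1)) μ) (hg1 : Integrable (fun x => g x ^ (α + 1)) μ)
    (hf1pos : 0 < ∫ x, f x ^ (α + 1) ∂μ) (hg1pos : 0 < ∫ x, g x ^ (α + 1) ∂μ) :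
    let I := (∫ x, f x ^ α * g x ∂μ) /
      ((∫ x, f x ^ (α + 1) ∂μ) ^ (α / (α + 1)) * (∫ x, g x ^ (α + 1) ∂μ) ^ (1 / (α + 1)))
    I ≤ 1 ∧ (I = 1 ↔ f =ᵐ[μ] g) := by
  set A := ∫ x, f x ^ (α + 1) ∂μ
  set C := ∫ x, g x ^ (α + 1) ∂μ
  have hα1 : 0 < α + 1 := by linarith
  have hw₁ : 0 < α / (α + 1) := by positivity
  have hw₂ : 0 < 1 / (α + 1) := by positivity
  have hw : α / (α + 1) + 1 / (α + 1) = 1 := by field_simp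
  have hfA0 : 0 ≤ᵐ[μ] fun x => f x ^ (α + 1) / A :=
    .of_forall fun x => div_nonneg (rpow_nonneg (hf0 x) _) hf1pos.le
  have hgC0 : 0 ≤ᵐ[μ] fun x => g x ^ (α + 1) / C :=
    .of_forall fun x => div_nonneg (rpow_nonneg (hg0 x) _) hg1pos.le
  have hfA1 : ∫ x, f x ^ (α + 1) / A ∂μ = 1 := by rw [integral_div, div_self hf1pos.ne']
  have hgC1 : ∫ x, g x ^ (α + 1) / C ∂μ = 1 := by rw [integral_div, div_self hg1pos.ne']
  have hpt : (fun x => (f x ^ (α + 1) / A) ^ (α / (α + 1)) * (g x ^ (α + 1) / C) ^ (1 / (α + 1)))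
      = fun x => f x ^ α * g x / (A ^ (α / (α + 1)) * C ^ (1 / (α + 1))) :=
    funext fun x => rpow_div_rpow_mul_rpow_div_rpow hα1.ne' (hf0 x) (hg0 x) hf1pos.le hg1pos.le
  constructor
  · have := integral_rpow_mul_rpow_le hw₁.le hw₂.le hw hfA0 hgC0 (hf1.div_const A) (hg1.div_const C)
    rwa [hpt, integral_div, hfA1, hgC1, mul_one, mul_one, hw] at this
  · rw [← rpow_div_integral_ae_eq_iff (.of_forall hf0) (.of_forall hg0) hα1.ne' hf1pos hg1pos
        hint hg,
      ← integral_rpow_mul_rpow_eq_iff hw₁ hw₂ hw hfA0 hgC0 (hf1.div_const A) (hg1.div_const C)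
        (by rw [hpt]; exact hfg.div_const _),
      hpt, integral_div, hfA1, hgC1, mul_one, mul_one, hw]

end

theorem ldpd_nonneg_iff_general
    {μ : Measure ℝ} {f g : ℝ → ℝ} {α : ℝ} (hα : 0 < α)
    (hf0 : ∀ x, 0 ≤ f x) (hg0 : ∀ x, 0 ≤ g x)
    (hfint : ∫ x, f x ∂μ = 1) (hgint : ∫ x, g x ∂μ = 1)
    (hfg : Integrable (fun x => f x ^ α * g x) μ)
    (hf1 : Integrable (fun x => f x ^ (α + 1)) μ)
    (hg1 : Integrable (fun x => g x ^ (α + 1)) μ)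
    (hfgpos : 0 < ∫ x, f x ^ α * g x ∂μ)
    (hf1pos : 0 < ∫ x, f x ^ (α + 1) ∂μ)
    (hg1pos : 0 < ∫ x, g x ^ (α + 1) ∂μ) :
    0 ≤ Real.log (∫ x, f x ^ (α + 1) ∂μ)
        - ((1 + α) / α) * Real.log (∫ x, f x ^ α * g x ∂μ)
        + (1 / α) * Real.log (∫ x, g x ^ (α + 1) ∂μ) ∧
    (Real.log (∫ x, f x ^ (α + 1) ∂μ)
        - ((1 + α) / α) * Real.log (∫ x, f x ^ α * g x ∂μ)
        + (1 / α) * Real.log (∫ x, g x ^ (α + 1) ∂μ) = 0 ↔ f =ᵐ[μ] g) := by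
  obtain ⟨hI_le, hI_eq⟩ := integral_rpow_mul_div_le_one_and_eq_one_iff hα hf0 hg0
    (hfint.trans hgint.symm) (hgint ▸ one_ne_zero) hfg hf1 hg1 hf1pos hg1pos
  rw [log_sub_mul_log_add_mul_log_eq hα hf1pos hfgpos hg1pos]
  set I := (∫ x, f x ^ α * g x ∂μ) /
    ((∫ x, f x ^ (α + 1) ∂μ) ^ (α / (α + 1)) * (∫ x, g x ^ (α + 1) ∂μ) ^ (1 / (α + 1)))
  have hI_pos : 0 < I := by positivity
  have hp : 0 < (1 + α) / α := by positivity
  refine ⟨mul_nonneg_of_nonpos_of_nonpos (by linarith) (log_nonpos hI_pos.le hI_le), ?_⟩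
  rw [mul_eq_zero, neg_eq_zero, or_iff_right hp.ne', ← hI_eq]
  exact ⟨eq_one_of_pos_of_log_eq_zero hI_pos, fun h => h ▸ log_one⟩

/-- The logarithmic density power divergence is nonnegative, and zero iff `f = g` a.e. -/
theorem ldpd_nonneg_iff
    {μ : Measure ℝ} {f g : ℝ → ℝ} {α : ℝ} (hα : 0 < α)
    (hf : Measurable f) (hg : Measurable g)
    (hf0 : ∀ x, 0 ≤ f x) (hg0 : ∀ x, 0 ≤ g x)
    (hfint : ∫ x, f x ∂μ = 1) (hgint : ∫ x, g x ∂μ = 1)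
    (hfg : Integrable (fun x => f x ^ α * g x) μ)
    (hf1 : Integrable (fun x => f x ^ (α + 1)) μ)
    (hg1 : Integrable (fun x => g x ^ (α + 1)) μ)
    (hfgpos : 0 < ∫ x, f x ^ α * g x ∂μ)
    (hf1pos : 0 < ∫ x, f x ^ (α + 1) ∂μ)
    (hg1pos : 0 < ∫ x, g x ^ (α + 1) ∂μ) :
    0 ≤ Real.log (∫ x, f x ^ (α + 1) ∂μ)
        - ((1 + α) / α) * Real.log (∫ x, f x ^ α * g x ∂μ)
        + (1 / α) * Real.log (∫ x, g x ^ (α + 1) ∂μ) ∧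
    (Real.log (∫ x, f x ^ (α + 1) ∂μ)
        - ((1 + α) / α) * Real.log (∫ x, f x ^ α * g x ∂μ)
        + (1 / α) * Real.log (∫ x, g x ^ (α + 1) ∂μ) = 0 ↔ f =ᵐ[μ] g) :=
  ldpd_nonneg_iff_general hα hf0 hg0 hfint hgint hfg hf1 hg1 hfgpos hf1pos hg1pos
end

section
/- Let B : [0,∞) → ℝ be twice differentiable, strictly convex with B(0) = B'(0) = 0, and suppose there exist α₀, α₁, α₂ > 0 such that for all θ > 0, (θB'(θ) − B(θ))^{α₀} (B(θ))^{α₂} = C θ^{α₀+α₂−α₁} (θB'(θ))^{α₁}, where C = α₀^{α₀}α₂^{α₂}/α₁^{α₁}. Then α₁ = α₀ + α₂ and B(θ)/(θB'(θ)) = α₂/(α₀+α₂) for all θ > 0. -/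
/-!
Put `x(θ) = B(θ) / (θ B'(θ))`. Strict convexity with `B(0) = B'(0) = 0` gives `0 < x(θ) < 1` and
`B'(θ) > 0`, and the constraint rewrites as `(1 - x)^α₀ x^α₂ = C B'(θ)^δ` with
`δ = α₁ - (α₀ + α₂)`. By weighted AM–GM the left side is at most
`C₀ = α₀^α₀ α₂^α₂ / (α₀+α₂)^(α₀+α₂)`, with equality only at `x = α₂ / (α₀+α₂)`, so `B'^δ` is
bounded. If `δ < 0` this contradicts `B'(θ) → 0` as `θ → 0⁺`. If `δ > 0`, then `x(θ)` stays
below some `ρ < 1` for `θ ≥ 1`, which forces `B'(kθ) ≥ r B'(θ)` for suitable `k, r > 1`, so `B'`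
is unbounded: again a contradiction. Hence `δ = 0`, `C = C₀`, and the equality case of AM–GM
pins down `x(θ)`.
-/

open Real Set Filter Topology

lemma one_sub_rpow_mul_rpow_lt {a b x : ℝ} (ha : 0 < a) (hb : 0 < b) (hx0 : 0 ≤ x) (hx1 : x ≤ 1)
    (hx : x ≠ b / (a + b)) :
    (1 - x) ^ a * x ^ b < a ^ a * b ^ b / (a + b) ^ (a + b) := by
  have hs : 0 < a + b := by positivity
  have hx1' : 0 ≤ 1 - x := by linarith
  -- weighted AM–GM with weights `a / (a + b)`, `b / (a + b)` at the points `(1 - x) / a`, `x / b`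
  have hamgm : ((1 - x) / a) ^ (a / (a + b)) * (x / b) ^ (b / (a + b)) < 1 / (a + b) := by
    have hne : (1 - x) / a ≠ x / b := by
      contrapose! hx
      field_simp at hx ⊢
      linarith
    convert (geom_mean_lt_arith_mean2_weighted_iff_of_pos (div_pos ha hs) (div_pos hb hs)
      (div_nonneg hx1' ha.le) (div_nonneg hx0 hb.le) (by field_simp)).2 hne using 1
    field_simp
    ring
  have hpow := rpow_lt_rpow (by positivity) hamgm hs
  rw [mul_rpow (by positivity) (by positivity), ← rpow_mul (by positivity),
    ← rpow_mul (by positivity), div_mul_cancel₀ _ hs.ne', div_mul_cancel₀ _ hs.ne',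
    div_rpow hx1' ha.le, div_rpow hx0 hb.le, div_rpow zero_le_one hs.le, one_rpow,
    div_mul_div_comm, div_lt_div_iff₀ (by positivity) (by positivity)] at hpow
  rw [lt_div_iff₀ (by positivity)]
  linarith

lemma one_sub_rpow_mul_rpow_le {a b x : ℝ} (ha : 0 < a) (hb : 0 < b) (hx0 : 0 ≤ x) (hx1 : x ≤ 1) :
    (1 - x) ^ a * x ^ b ≤ a ^ a * b ^ b / (a + b) ^ (a + b) := by
  rcases eq_or_ne x (b / (a + b)) with rfl | hx
  · have hs : 0 < a + b := by positivity
    rw [show 1 - b / (a + b) = a / (a + b) by field_simp; ring, div_rpow ha.le hs.le,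
      div_rpow hb.le hs.le, div_mul_div_comm, ← rpow_add hs]
  · exact (one_sub_rpow_mul_rpow_lt ha hb hx0 hx1 hx).le

lemma le_one_sub_of_le_one_sub_rpow_mul_rpow {a b c x : ℝ} (ha : 0 < a) (hb : 0 ≤ b)
    (hc : 0 ≤ c) (hx0 : 0 ≤ x) (hx1 : x ≤ 1) (h : c ≤ (1 - x) ^ a * x ^ b) :
    x ≤ 1 - c ^ a⁻¹ := by
  have hx1' : 0 ≤ 1 - x := by linarith
  have hc' : c ≤ (1 - x) ^ a :=
    h.trans (mul_le_of_le_one_right (rpow_nonneg hx1' a) (rpow_le_one hx0 hx1 hb))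
  have := rpow_le_rpow hc hc' (inv_nonneg.2 ha.le)
  rw [rpow_rpow_inv hx1' ha.ne'] at this
  linarith

lemma one_sub_div_rpow_mul_div_rpow_eq {q d θ a b c C : ℝ} (hθ : 0 < θ) (hq : 0 < q)
    (hqd : q < θ * d) (h : (θ * d - q) ^ a * q ^ b = C * θ ^ (a + b - c) * (θ * d) ^ c) :
    (1 - q / (θ * d)) ^ a * (q / (θ * d)) ^ b = C * d ^ (c - (a + b)) := by
  have hp : 0 < θ * d := hq.trans hqd
  have hd : 0 < d := pos_of_mul_pos_right hp hθ.le
  calc (1 - q / (θ * d)) ^ a * (q / (θ * d)) ^ b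
      = (θ * d - q) ^ a * q ^ b / (θ * d) ^ (a + b) := by
        rw [one_sub_div hp.ne', div_rpow (by linarith) hp.le, div_rpow hq.le hp.le, rpow_add hp]
        ring
    _ = C * (θ ^ (a + b - c) * θ ^ (c - (a + b))) * d ^ (c - (a + b)) := by
        rw [h, mul_div_assoc, ← rpow_sub hp, mul_rpow hθ.le hd.le]
        ring
    _ = C * d ^ (c - (a + b)) := by
        rw [← rpow_add hθ, sub_add_sub_cancel', sub_self, rpow_zero, mul_one]

namespace StrictConvexOn

variable {S : Set ℝ} {f f' : ℝ → ℝ}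

lemma strictMonoOn_of_hasDerivWithinAt (hf : StrictConvexOn ℝ S f)
    (hf' : ∀ y ∈ S, HasDerivWithinAt f (f' y) S y) : StrictMonoOn f' S := fun x hx y hy hxy =>
  (hf.lt_slope_of_hasDerivWithinAt hx hy hxy (hf' x hx)).trans
    (hf.slope_lt_of_hasDerivWithinAt hx hy hxy (hf' y hy))

lemma add_mul_lt_of_hasDerivWithinAt (hf : StrictConvexOn ℝ S f) {x y f'x : ℝ} (hx : x ∈ S)
    (hy : y ∈ S) (hxy : x < y) (hf' : HasDerivWithinAt f f'x S x) :
    f x + (y - x) * f'x < f y := by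
  have h := hf.lt_slope_of_hasDerivWithinAt hx hy hxy hf'
  rw [slope_def_field, lt_div_iff₀ (sub_pos.2 hxy)] at h
  linarith

end StrictConvexOn

section StrictConvexOnIci

variable {B B' : ℝ → ℝ}

lemma pos_of_strictConvexOn_Ici (hconv : StrictConvexOn ℝ (Ici 0) B)
    (hderiv : HasDerivWithinAt B (B' 0) (Ici 0) 0) (hB0 : B 0 = 0) (hB'0 : B' 0 = 0)
    {θ : ℝ} (hθ : 0 < θ) : 0 < B θ := by
  simpa [hB0, hB'0] using
    hconv.add_mul_lt_of_hasDerivWithinAt self_mem_Ici (mem_Ici.2 hθ.le) hθ hderiv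

lemma lt_mul_of_strictConvexOn_Ici (hconv : StrictConvexOn ℝ (Ici 0) B) {θ : ℝ} (hθ : 0 < θ)
    (hderiv : HasDerivWithinAt B (B' θ) (Ici 0) θ) (hB0 : B 0 = 0) : B θ < θ * B' θ := by
  have h := hconv.slope_lt_of_hasDerivWithinAt self_mem_Ici (mem_Ici.2 hθ.le) hθ hderiv
  rwa [slope_def_field, hB0, sub_zero, sub_zero, div_lt_iff₀ hθ, mul_comm] at h

lemma deriv_pos_of_strictConvexOn_Ici (hconv : StrictConvexOn ℝ (Ici 0) B)
    (hderiv : ∀ y ∈ Ici (0 : ℝ), HasDerivWithinAt B (B' y) (Ici 0) y)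
    (hB0 : B 0 = 0) (hB'0 : B' 0 = 0) {θ : ℝ} (hθ : 0 < θ) : 0 < B' θ :=
  pos_of_mul_pos_right ((pos_of_strictConvexOn_Ici hconv (hderiv 0 self_mem_Ici) hB0 hB'0 hθ).trans
    (lt_mul_of_strictConvexOn_Ici hconv hθ (hderiv θ hθ.le) hB0)) hθ.le

lemma div_mul_mem_Ioo_of_strictConvexOn_Ici (hconv : StrictConvexOn ℝ (Ici 0) B)
    (hderiv : ∀ y ∈ Ici (0 : ℝ), HasDerivWithinAt B (B' y) (Ici 0) y)
    (hB0 : B 0 = 0) (hB'0 : B' 0 = 0) {θ : ℝ} (hθ : 0 < θ) : B θ / (θ * B' θ) ∈ Ioo 0 1 := by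
  have hB := pos_of_strictConvexOn_Ici hconv (hderiv 0 self_mem_Ici) hB0 hB'0 hθ
  have hBlt := lt_mul_of_strictConvexOn_Ici hconv hθ (hderiv θ hθ.le) hB0
  exact ⟨div_pos hB (hB.trans hBlt), (div_lt_one (hB.trans hBlt)).2 hBlt⟩

lemma tendsto_deriv_nhdsGT_zero (hconv : StrictConvexOn ℝ (Ici 0) B)
    (hderiv : ∀ y ∈ Ici (0 : ℝ), HasDerivWithinAt B (B' y) (Ici 0) y)
    (hB0 : B 0 = 0) (hB'0 : B' 0 = 0) : Tendsto B' (𝓝[>] 0) (𝓝[>] 0) := by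
  have hslope : Tendsto (slope B 0) (𝓝[>] 0) (𝓝 0) := by
    have h := hderiv 0 self_mem_Ici
    rwa [← hasDerivWithinAt_Ioi_iff_Ici,
      hasDerivWithinAt_iff_tendsto_slope' (s := Ioi 0) (lt_irrefl _), hB'0] at h
  have hdouble : Tendsto (fun t : ℝ => 2 * t) (𝓝[>] 0) (𝓝[>] 0) :=
    tendsto_nhdsWithin_of_tendsto_nhds_of_eventually_within _
      (((continuous_const_mul 2).tendsto' 0 0 (mul_zero 2)).mono_left nhdsWithin_le_nhds)
      (eventually_mem_nhdsWithin.mono fun t (ht : 0 < t) => mul_pos two_pos ht)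
  have hpos : ∀ t > 0, 0 < B' t := fun t => deriv_pos_of_strictConvexOn_Ici hconv hderiv hB0 hB'0
  -- `B' t` lies below the slope of the chord over `[t, 2t]`, which is at most `2 B(2t) / (2t)`
  have hle : ∀ t > 0, B' t ≤ 2 * slope B 0 (2 * t) := fun t ht => by
    have h := hconv.lt_slope_of_hasDerivWithinAt (mem_Ici.2 ht.le) (mem_Ici.2 (by linarith))
      (by linarith : t < 2 * t) (hderiv t ht.le)
    have := pos_of_strictConvexOn_Ici hconv (hderiv 0 self_mem_Ici) hB0 hB'0 ht
    rw [slope_def_field, show 2 * t - t = t by ring, lt_div_iff₀ ht] at h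
    rw [slope_def_field, hB0, sub_zero, sub_zero, mul_div_assoc', le_div_iff₀ (by linarith)]
    nlinarith
  refine tendsto_nhdsWithin_of_tendsto_nhds_of_eventually_within _
    (tendsto_of_tendsto_of_tendsto_of_le_of_le' tendsto_const_nhds
      (by simpa using (hslope.comp hdouble).const_mul 2) ?_ ?_)
    (eventually_mem_nhdsWithin.mono hpos)
  · exact eventually_mem_nhdsWithin.mono fun t ht => (hpos t ht).le
  · exact eventually_mem_nhdsWithin.mono hle

lemma sub_one_mul_deriv_lt_of_div_le (hconv : StrictConvexOn ℝ (Ici 0) B)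
    (hderiv : ∀ y ∈ Ici (0 : ℝ), HasDerivWithinAt B (B' y) (Ici 0) y)
    (hB0 : B 0 = 0) (hB'0 : B' 0 = 0) {T k ρ : ℝ} (hT : 0 < T) (hk : 1 < k)
    (hratio : B (k * T) / (k * T * B' (k * T)) ≤ ρ) : (k - 1) * B' T < ρ * k * B' (k * T) := by
  have hkT : 0 < k * T := by positivity
  have htan := hconv.add_mul_lt_of_hasDerivWithinAt (mem_Ici.2 hT.le) (mem_Ici.2 hkT.le)
    (by nlinarith) (hderiv T hT.le)
  rw [div_le_iff₀ (mul_pos hkT (deriv_pos_of_strictConvexOn_Ici hconv hderiv hB0 hB'0 hkT))]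
    at hratio
  refine lt_of_mul_lt_mul_right ?_ hT.le
  nlinarith [pos_of_strictConvexOn_Ici hconv (hderiv 0 self_mem_Ici) hB0 hB'0 hT]

lemma tendsto_deriv_atTop_of_div_le (hconv : StrictConvexOn ℝ (Ici 0) B)
    (hderiv : ∀ y ∈ Ici (0 : ℝ), HasDerivWithinAt B (B' y) (Ici 0) y)
    (hB0 : B 0 = 0) (hB'0 : B' 0 = 0) {ρ : ℝ} (hρ : ρ < 1)
    (hratio : ∀ θ ≥ 1, B θ / (θ * B' θ) ≤ ρ) : Tendsto B' atTop atTop := by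
  have hB'1 := deriv_pos_of_strictConvexOn_Ici hconv hderiv hB0 hB'0 one_pos
  have hρ0 : 0 < ρ :=
    (div_mul_mem_Ioo_of_strictConvexOn_Ici hconv hderiv hB0 hB'0 one_pos).1.trans_le
      (hratio 1 le_rfl)
  set k := 2 / (1 - ρ)
  have hk : 1 < k := by rw [lt_div_iff₀ (by linarith)]; linarith
  set r := (k - 1) / (ρ * k)
  have hr : 1 < r := by
    rw [lt_div_iff₀ (by positivity)]
    have : k * (1 - ρ) = 2 := div_mul_cancel₀ _ (by linarith)
    linarith
  have hstep : ∀ T ≥ 1, r * B' T ≤ B' (k * T) := fun T hT => by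
    have := sub_one_mul_deriv_lt_of_div_le hconv hderiv hB0 hB'0 (by linarith) hk
      (hratio (k * T) (by nlinarith))
    rw [div_mul_eq_mul_div, div_le_iff₀ (by positivity)]
    linarith
  have hiter (n : ℕ) : r ^ n * B' 1 ≤ B' (k ^ n) := by
    induction n with
    | zero => simp
    | succ n ih =>
      rw [pow_succ', pow_succ', mul_assoc]
      exact (mul_le_mul_of_nonneg_left ih (by linarith)).trans (hstep _ (one_le_pow₀ hk.le))
  refine tendsto_atTop_atTop.2 fun M => ?_
  obtain ⟨n, hn⟩ := pow_unbounded_of_one_lt (M / B' 1) hr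
  rw [div_lt_iff₀ hB'1] at hn
  have hkn : (0 : ℝ) ≤ k ^ n := by positivity
  exact ⟨k ^ n, fun θ hθ => hn.le.trans ((hiter n).trans
    ((hconv.strictMonoOn_of_hasDerivWithinAt hderiv).monotoneOn hkn (hkn.trans hθ) hθ))⟩

lemma tendsto_deriv_atTop_of_one_sub_rpow_mul_rpow_eq (hconv : StrictConvexOn ℝ (Ici 0) B)
    (hderiv : ∀ y ∈ Ici (0 : ℝ), HasDerivWithinAt B (B' y) (Ici 0) y)
    (hB0 : B 0 = 0) (hB'0 : B' 0 = 0) {a b C δ : ℝ} (ha : 0 < a) (hb : 0 ≤ b) (hC : 0 < C)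
    (hδ : 0 < δ)
    (hkey : ∀ θ > 0, (1 - B θ / (θ * B' θ)) ^ a * (B θ / (θ * B' θ)) ^ b = C * B' θ ^ δ) :
    Tendsto B' atTop atTop := by
  have hB'1 := deriv_pos_of_strictConvexOn_Ici hconv hderiv hB0 hB'0 one_pos
  refine tendsto_deriv_atTop_of_div_le hconv hderiv hB0 hB'0
    (sub_lt_self 1 (by positivity : 0 < (C * B' 1 ^ δ) ^ a⁻¹)) fun θ hθ => ?_
  have hθ0 : 0 < θ := one_pos.trans_le hθ
  have hx := div_mul_mem_Ioo_of_strictConvexOn_Ici hconv hderiv hB0 hB'0 hθ0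
  have hmono := (hconv.strictMonoOn_of_hasDerivWithinAt hderiv).monotoneOn
    (mem_Ici.2 zero_le_one) (mem_Ici.2 hθ0.le) hθ
  exact le_one_sub_of_le_one_sub_rpow_mul_rpow ha hb (by positivity) hx.1.le hx.2.le
    (hkey θ hθ0 ▸ mul_le_mul_of_nonneg_left (rpow_le_rpow hB'1.le hmono hδ.le) hC.le)

end StrictConvexOnIci

theorem lbf_constraint_forces_ratio_general
    (B B' : ℝ → ℝ)
    (hconv : StrictConvexOn ℝ (Set.Ici 0) B)
    (hderiv : ∀ y ∈ Set.Ici (0 : ℝ), HasDerivWithinAt B (B' y) (Set.Ici 0) y)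
    (hB0 : B 0 = 0) (hB'0 : B' 0 = 0)
    (α₀ α₁ α₂ : ℝ) (h₀ : 0 < α₀) (h₁ : 0 < α₁) (h₂ : 0 < α₂)
    (heq : ∀ θ > (0 : ℝ),
      (θ * B' θ - B θ) ^ α₀ * (B θ) ^ α₂ =
        (α₀ ^ α₀ * α₂ ^ α₂ / α₁ ^ α₁) * θ ^ (α₀ + α₂ - α₁) * (θ * B' θ) ^ α₁) :
    α₁ = α₀ + α₂ ∧ ∀ θ > (0 : ℝ), B θ / (θ * B' θ) = α₂ / (α₀ + α₂) := by
  have hx θ (hθ : 0 < θ) := div_mul_mem_Ioo_of_strictConvexOn_Ici hconv hderiv hB0 hB'0 hθ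
  have key θ (hθ : 0 < θ) := one_sub_div_rpow_mul_div_rpow_eq hθ
    (pos_of_strictConvexOn_Ici hconv (hderiv 0 self_mem_Ici) hB0 hB'0 hθ)
    (lt_mul_of_strictConvexOn_Ici hconv hθ (hderiv θ hθ.le) hB0) (heq θ hθ)
  set C := α₀ ^ α₀ * α₂ ^ α₂ / α₁ ^ α₁
  have hC : 0 < C := by positivity
  set δ := α₁ - (α₀ + α₂)
  have hbounded (l : Filter ℝ) [l.NeBot] (hl : ∀ᶠ θ in l, 0 < θ) :
      ¬Tendsto (fun θ => B' θ ^ δ) l atTop := fun h => by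
    obtain ⟨θ, hθ, hθ0⟩ :=
      ((h.eventually_gt_atTop (α₀ ^ α₀ * α₂ ^ α₂ / (α₀ + α₂) ^ (α₀ + α₂) / C)).and hl).exists
    refine hθ.not_ge ((le_div_iff₀' hC).2 ?_)
    exact key θ hθ0 ▸ one_sub_rpow_mul_rpow_le h₀ h₂ (hx θ hθ0).1.le (hx θ hθ0).2.le
  have hα : α₁ = α₀ + α₂ := by
    rcases lt_trichotomy α₁ (α₀ + α₂) with hlt | hα | hgt
    · exact absurd ((tendsto_rpow_neg_nhdsGT_zero (sub_neg.2 hlt)).comp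
        (tendsto_deriv_nhdsGT_zero hconv hderiv hB0 hB'0)) (hbounded (𝓝[>] 0) self_mem_nhdsWithin)
    · exact hα
    · exact absurd ((tendsto_rpow_atTop (sub_pos.2 hgt)).comp
        (tendsto_deriv_atTop_of_one_sub_rpow_mul_rpow_eq hconv hderiv hB0 hB'0 h₀ h₂.le hC
          (sub_pos.2 hgt) key)) (hbounded atTop (eventually_gt_atTop 0))
  refine ⟨hα, fun θ hθ => by_contra fun hne => ?_⟩
  have := one_sub_rpow_mul_rpow_lt h₀ h₂ (hx θ hθ).1.le (hx θ hθ).2.le hne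
  rw [key θ hθ, show δ = 0 from sub_eq_zero.2 hα, rpow_zero, mul_one] at this
  exact this.ne (by simp only [C, hα])

/-- If the equality constraint
`(θB'(θ) − B(θ))^{α₀} (B(θ))^{α₂} = C θ^{α₀+α₂−α₁} (θB'(θ))^{α₁}` holds for all `θ > 0`
with `C = α₀^{α₀}α₂^{α₂}/α₁^{α₁}`, then `α₁ = α₀ + α₂` and
`B(θ)/(θB'(θ)) = α₂/(α₀+α₂)` for all `θ > 0`. -/
theorem lbf_constraint_forces_ratio
    (B B' B'' : ℝ → ℝ)
    (hconv : StrictConvexOn ℝ (Set.Ici 0) B)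
    (hderiv : ∀ y ∈ Set.Ici (0 : ℝ), HasDerivWithinAt B (B' y) (Set.Ici 0) y)
    (hderiv2 : ∀ y ∈ Set.Ici (0 : ℝ), HasDerivWithinAt B' (B'' y) (Set.Ici 0) y)
    (hB0 : B 0 = 0) (hB'0 : B' 0 = 0)
    (α₀ α₁ α₂ : ℝ) (h₀ : 0 < α₀) (h₁ : 0 < α₁) (h₂ : 0 < α₂)
    (heq : ∀ θ > (0 : ℝ),
      (θ * B' θ - B θ) ^ α₀ * (B θ) ^ α₂ =
        (α₀ ^ α₀ * α₂ ^ α₂ / α₁ ^ α₁) * θ ^ (α₀ + α₂ - α₁) * (θ * B' θ) ^ α₁) :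
    α₁ = α₀ + α₂ ∧ ∀ θ > (0 : ℝ), B θ / (θ * B' θ) = α₂ / (α₀ + α₂) :=
  lbf_constraint_forces_ratio_general B B' hconv hderiv hB0 hB'0 α₀ α₁ α₂ h₀ h₁ h₂ heq
end

section
/- Let B : [0,∞) → ℝ be twice differentiable, strictly convex with B(0) = B'(0) = 0, and suppose for some α₀, α₁, α₂ > 0 the equation (θB'(θ) − B(θ))^{α₀}(B(θ))^{α₂} = C θ^{β}(θB'(θ))^{α₁} holds for all θ > 0 with β = α₀+α₂−α₁ and C = α₀^{α₀}α₂^{α₂}/α₁^{α₁}. Then lim_{θ→∞} B'(θ) = ∞. -/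
/-!
`B'` is increasing, so if it does not tend to `∞` it converges to some `c`, which is positive by
strict convexity. Dividing the constraint by `θ ^ (α₀ + α₂)` rewrites it as
`(B' θ - B θ / θ) ^ α₀ * (B θ / θ) ^ α₂ = C * B' θ ^ α₁`. Convexity forces `B θ / θ → c` as well, so
the left side tends to `0` while the right side tends to `C * c ^ α₁ > 0`.
-/

open Filter Set Topology

theorem ConvexOn.add_mul_sub_le_of_hasDerivWithinAt {S : Set ℝ} {f : ℝ → ℝ} {x y f' : ℝ}
    (hf : ConvexOn ℝ S f) (hx : x ∈ S) (hy : y ∈ S) (hd : HasDerivWithinAt f f' S x) :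
    f x + f' * (y - x) ≤ f y := by
  rcases lt_trichotomy x y with hxy | rfl | hyx
  · have h := hf.le_slope_of_hasDerivWithinAt hx hy hxy hd
    rw [slope_def_field, le_div_iff₀ (sub_pos.2 hxy)] at h
    linarith
  · simp
  · have h := hf.slope_le_of_hasDerivWithinAt hy hx hyx hd
    rw [slope_def_field, div_le_iff₀ (sub_pos.2 hyx)] at h
    linarith

theorem StrictConvexOn.strictMonoOn_of_hasDerivWithinAt_s15 {S : Set ℝ} {f f' : ℝ → ℝ}
    (hf : StrictConvexOn ℝ S f) (hd : ∀ x ∈ S, HasDerivWithinAt f (f' x) S x) :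
    StrictMonoOn f' S := fun x hx y hy hxy =>
  (hf.lt_slope_of_hasDerivWithinAt hx hy hxy (hd x hx)).trans
    (hf.slope_lt_of_hasDerivWithinAt hx hy hxy (hd y hy))

theorem tendsto_atTop_of_monotoneOn_Ici {ι α : Type*} [LinearOrder ι] [TopologicalSpace α]
    [ConditionallyCompleteLinearOrder α] [OrderTopology α] {f : ι → α} {a : ι}
    (hf : MonotoneOn f (Ici a)) : Tendsto f atTop atTop ∨ ∃ l, Tendsto f atTop (𝓝 l) := by
  have hmono : Monotone fun x => f (max x a) := fun x y hxy =>
    hf (le_max_right x a) (le_max_right y a) (max_le_max hxy le_rfl)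
  have heq : (fun x => f (max x a)) =ᶠ[atTop] f := by
    filter_upwards [eventually_ge_atTop a] with x hx
    rw [max_eq_left hx]
  exact (tendsto_atTop_of_monotone hmono).imp (·.congr' heq) fun ⟨l, hl⟩ => ⟨l, hl.congr' heq⟩

theorem tendsto_add_mul_sub_div_atTop {g : ℝ → ℝ} {c : ℝ} (u t : ℝ)
    (hg : Tendsto g atTop (𝓝 c)) : Tendsto (fun x => (u + g x * (x - t)) / x) atTop (𝓝 c) := by
  have h : Tendsto (fun x => g x + (u - g x * t) / x) atTop (𝓝 (c + 0)) :=
    hg.add ((tendsto_const_nhds.sub (hg.mul_const t)).div_atTop tendsto_id)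
  rw [add_zero] at h
  refine h.congr' ?_
  filter_upwards [eventually_ne_atTop 0] with x hx
  field_simp
  ring

theorem ConvexOn.tendsto_div_atTop_of_tendsto_deriv {f f' : ℝ → ℝ} {a c : ℝ}
    (hf : ConvexOn ℝ (Ici a) f) (hd : ∀ x ∈ Ici a, HasDerivWithinAt f (f' x) (Ici a) x)
    (hlim : Tendsto f' atTop (𝓝 c)) : Tendsto (fun x => f x / x) atTop (𝓝 c) := by
  have tangent : ∀ x ∈ Ici a, ∀ y ∈ Ici a, f x + f' x * (y - x) ≤ f y := fun x hx y hy =>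
    hf.add_mul_sub_le_of_hasDerivWithinAt hx hy (hd x hx)
  refine tendsto_order.2 ⟨fun b hb => ?_, fun b hb => ?_⟩
  · obtain ⟨t, hbt, ht⟩ :=
      ((hlim.eventually (eventually_gt_nhds hb)).and (eventually_ge_atTop a)).exists
    filter_upwards [(tendsto_add_mul_sub_div_atTop (f t) t tendsto_const_nhds).eventually
      (eventually_gt_nhds hbt), eventually_ge_atTop a, eventually_gt_atTop 0] with x hbx hx hx0
    exact hbx.trans_le (div_le_div_of_nonneg_right (tangent t ht x hx) hx0.le)
  · filter_upwards [(tendsto_add_mul_sub_div_atTop (f a) a hlim).eventually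
      (eventually_lt_nhds hb), eventually_ge_atTop a, eventually_gt_atTop 0] with x hbx hx hx0
    refine lt_of_le_of_lt (div_le_div_of_nonneg_right ?_ hx0.le) hbx
    linarith [tangent x hx a self_mem_Ici]

theorem sub_div_rpow_mul_div_rpow_eq {θ p q C a₀ a₁ a₂ : ℝ} (hθ : 0 < θ) (hq : 0 ≤ q)
    (hqp : q ≤ θ * p)
    (h : (θ * p - q) ^ a₀ * q ^ a₂ = C * θ ^ (a₀ + a₂ - a₁) * (θ * p) ^ a₁) :
    (p - q / θ) ^ a₀ * (q / θ) ^ a₂ = C * p ^ a₁ := by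
  have hsub : p - q / θ = (θ * p - q) / θ := by field_simp
  have hp : p = θ * p / θ := by field_simp
  rw [hsub, Real.div_rpow (sub_nonneg.2 hqp) hθ.le, Real.div_rpow hq hθ.le]
  nth_rewrite 2 [hp]
  rw [Real.div_rpow (hq.trans hqp) hθ.le]
  rw [Real.rpow_sub hθ, Real.rpow_add hθ] at h
  have h₀ : θ ^ a₀ ≠ 0 := (Real.rpow_pos_of_pos hθ a₀).ne'
  have h₁ : θ ^ a₁ ≠ 0 := (Real.rpow_pos_of_pos hθ a₁).ne'
  have h₂ : θ ^ a₂ ≠ 0 := (Real.rpow_pos_of_pos hθ a₂).ne'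
  field_simp at h ⊢
  linarith

theorem not_eventually_sub_rpow_mul_rpow_eq {α : Type*} {l : Filter α} [l.NeBot] {f g : α → ℝ}
    {c C a₀ a₁ a₂ : ℝ} (hf : Tendsto f l (𝓝 c)) (hg : Tendsto g l (𝓝 c)) (hc : 0 < c)
    (hC : 0 < C) (ha₀ : 0 < a₀) :
    ¬ ∀ᶠ x in l, (f x - g x) ^ a₀ * g x ^ a₂ = C * f x ^ a₁ := by
  intro h
  have hsub : Tendsto (fun x => f x - g x) l (𝓝 0) := by simpa using hf.sub hg
  have hlhs : Tendsto (fun x => (f x - g x) ^ a₀ * g x ^ a₂) l (𝓝 0) := by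
    simpa using (hsub.rpow_const_nhds_zero ha₀).mul (hg.rpow_const (p := a₂) (Or.inl hc.ne'))
  have hrhs : Tendsto (fun x => C * f x ^ a₁) l (𝓝 (C * c ^ a₁)) :=
    (hf.rpow_const (Or.inl hc.ne')).const_mul C
  have := tendsto_nhds_unique (hlhs.congr' h) hrhs
  exact (mul_pos hC (Real.rpow_pos_of_pos hc a₁)).ne' this.symm

theorem lbf_deriv_tendsto_atTop_general
    (B B' : ℝ → ℝ)
    (hconv : StrictConvexOn ℝ (Set.Ici 0) B)
    (hderiv : ∀ y ∈ Set.Ici (0 : ℝ), HasDerivWithinAt B (B' y) (Set.Ici 0) y)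
    (hB0 : B 0 = 0) (hB'0 : B' 0 = 0)
    (α₀ α₁ α₂ : ℝ) (h₀ : 0 < α₀) (h₁ : 0 < α₁) (h₂ : 0 < α₂)
    (heq : ∀ θ > (0 : ℝ),
      (θ * B' θ - B θ) ^ α₀ * (B θ) ^ α₂ =
        (α₀ ^ α₀ * α₂ ^ α₂ / α₁ ^ α₁) * θ ^ (α₀ + α₂ - α₁) * (θ * B' θ) ^ α₁) :
    Tendsto B' atTop atTop := by
  have tangent : ∀ x ∈ Ici (0 : ℝ), ∀ y ∈ Ici (0 : ℝ), B x + B' x * (y - x) ≤ B y :=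
    fun x hx y hy => hconv.convexOn.add_mul_sub_le_of_hasDerivWithinAt hx hy (hderiv x hx)
  have hmono := hconv.strictMonoOn_of_hasDerivWithinAt_s15 hderiv
  refine (tendsto_atTop_of_monotoneOn_Ici hmono.monotoneOn).resolve_right ?_
  rintro ⟨c, hc⟩
  have hcpos : 0 < c := by
    have h1 : B' 0 < B' 1 := hmono self_mem_Ici (mem_Ici.2 zero_le_one) one_pos
    refine (hB'0 ▸ h1).trans_le (ge_of_tendsto hc ?_)
    filter_upwards [eventually_ge_atTop 1] with x hx
    exact hmono.monotoneOn (mem_Ici.2 zero_le_one) (mem_Ici.2 (zero_le_one.trans hx)) hx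
  have hC : 0 < α₀ ^ α₀ * α₂ ^ α₂ / α₁ ^ α₁ := by positivity
  have rescaled : ∀ᶠ θ in atTop, (B' θ - B θ / θ) ^ α₀ * (B θ / θ) ^ α₂ =
      α₀ ^ α₀ * α₂ ^ α₂ / α₁ ^ α₁ * B' θ ^ α₁ := by
    filter_upwards [eventually_gt_atTop 0] with θ hθ
    have hBnonneg := tangent 0 self_mem_Ici θ hθ.le
    have hBle := tangent θ hθ.le 0 self_mem_Ici
    rw [hB0, hB'0] at hBnonneg
    rw [hB0] at hBle
    exact sub_div_rpow_mul_div_rpow_eq hθ (by linarith) (by linarith) (heq θ hθ)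
  exact not_eventually_sub_rpow_mul_rpow_eq hc
    (hconv.convexOn.tendsto_div_atTop_of_tendsto_deriv hderiv hc) hcpos hC h₀ rescaled

/-- Under the logarithmic-Bregman equality constraint, the derivative `B'` must tend
to infinity: `lim_{θ→∞} B'(θ) = ∞`. -/
theorem lbf_deriv_tendsto_atTop
    (B B' B'' : ℝ → ℝ)
    (hconv : StrictConvexOn ℝ (Set.Ici 0) B)
    (hderiv : ∀ y ∈ Set.Ici (0 : ℝ), HasDerivWithinAt B (B' y) (Set.Ici 0) y)
    (hderiv2 : ∀ y ∈ Set.Ici (0 : ℝ), HasDerivWithinAt B' (B'' y) (Set.Ici 0) y)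
    (hB0 : B 0 = 0) (hB'0 : B' 0 = 0)
    (α₀ α₁ α₂ : ℝ) (h₀ : 0 < α₀) (h₁ : 0 < α₁) (h₂ : 0 < α₂)
    (heq : ∀ θ > (0 : ℝ),
      (θ * B' θ - B θ) ^ α₀ * (B θ) ^ α₂ =
        (α₀ ^ α₀ * α₂ ^ α₂ / α₁ ^ α₁) * θ ^ (α₀ + α₂ - α₁) * (θ * B' θ) ^ α₁) :
    Tendsto B' atTop atTop :=
  lbf_deriv_tendsto_atTop_general B B' hconv hderiv hB0 hB'0 α₀ α₁ α₂ h₀ h₁ h₂ heq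
end

section
/- For probability densities f, g with respect to μ and α > 0, the DPD divergence (1/α)∫[g^{α+1} + α f^{α+1} − (α+1) f^α g] dμ is nonnegative, with equality if and only if f = g a.e. [μ]. -/
/-!
The integrand is the Bregman divergence of the strictly convex function `x ↦ x ^ (α + 1)` on
`[0, ∞)`: it is the gap `g^{α+1} - (f^{α+1} + (α+1) f^α (g - f))` between that function and its
tangent line at `f`, evaluated at `g`. Strict convexity makes the gap pointwise nonnegative and
zero exactly where `f = g`, and a nonnegative integrable function has zero integral iff it
vanishes almost everywhere.
-/

open MeasureTheory

theorem StrictConvexOn.add_mul_sub_lt_of_hasDerivAt {S : Set ℝ} {φ : ℝ → ℝ} {φ' x y : ℝ}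
    (hφ : StrictConvexOn ℝ S φ) (hx : x ∈ S) (hy : y ∈ S) (hxy : x ≠ y)
    (hφ' : HasDerivAt φ φ' x) :
    φ x + φ' * (y - x) < φ y := by
  rcases hxy.lt_or_gt with hlt | hgt
  · have hslope := hφ.lt_slope_of_hasDerivAt hx hy hlt hφ'
    rw [slope_def_field, lt_div_iff₀ (sub_pos.2 hlt)] at hslope
    linarith
  · have hslope := hφ.slope_lt_of_hasDerivAt hy hx hgt hφ'
    rw [slope_def_field, div_lt_iff₀ (sub_pos.2 hgt)] at hslope
    linarith

theorem Real.rpow_succ_bregman_pos {α a b : ℝ} (hα : 0 < α) (ha : 0 ≤ a) (hb : 0 ≤ b)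
    (hab : a ≠ b) :
    0 < b ^ (α + 1) + α * a ^ (α + 1) - (α + 1) * a ^ α * b := by
  have hconvex : StrictConvexOn ℝ (Set.Ici 0) fun x : ℝ => x ^ (α + 1) :=
    strictConvexOn_rpow (by linarith)
  have hderiv : HasDerivAt (fun x : ℝ => x ^ (α + 1)) ((α + 1) * a ^ α) a := by
    simpa using Real.hasDerivAt_rpow_const (x := a) (p := α + 1) (Or.inr (by linarith))
  have htangent := hconvex.add_mul_sub_lt_of_hasDerivAt ha hb hab hderiv
  have hpow : a ^ (α + 1) = a ^ α * a := Real.rpow_add_one' ha (by linarith)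
  linear_combination htangent - (α + 1) * hpow

theorem Real.rpow_succ_bregman_eq_zero_iff {α a b : ℝ} (hα : 0 < α) (ha : 0 ≤ a)
    (hb : 0 ≤ b) :
    b ^ (α + 1) + α * a ^ (α + 1) - (α + 1) * a ^ α * b = 0 ↔ a = b := by
  refine ⟨fun hzero => by_contra fun hab => (Real.rpow_succ_bregman_pos hα ha hb hab).ne' hzero,
    ?_⟩
  rintro rfl
  rw [Real.rpow_add_one' ha (by linarith)]
  ring

theorem Real.rpow_succ_bregman_nonneg {α a b : ℝ} (hα : 0 < α) (ha : 0 ≤ a) (hb : 0 ≤ b) :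
    0 ≤ b ^ (α + 1) + α * a ^ (α + 1) - (α + 1) * a ^ α * b := by
  rcases eq_or_ne a b with rfl | hab
  · exact ((Real.rpow_succ_bregman_eq_zero_iff hα ha ha).2 rfl).ge
  · exact (Real.rpow_succ_bregman_pos hα ha hb hab).le

theorem dpd_nonneg_iff_general
    {μ : Measure ℝ} {f g : ℝ → ℝ} {α : ℝ} (hα : 0 < α)
    (hf0 : ∀ x, 0 ≤ f x) (hg0 : ∀ x, 0 ≤ g x)
    (hfg : Integrable (fun x => f x ^ α * g x) μ)
    (hf1 : Integrable (fun x => f x ^ (α + 1)) μ)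
    (hg1 : Integrable (fun x => g x ^ (α + 1)) μ) :
    0 ≤ (1 / α) * ∫ x, (g x ^ (α + 1) + α * f x ^ (α + 1)
        - (α + 1) * f x ^ α * g x) ∂μ ∧
    ((1 / α) * ∫ x, (g x ^ (α + 1) + α * f x ^ (α + 1)
        - (α + 1) * f x ^ α * g x) ∂μ = 0 ↔ f =ᵐ[μ] g) := by
  have hnonneg : 0 ≤ fun x => g x ^ (α + 1) + α * f x ^ (α + 1) - (α + 1) * f x ^ α * g x :=
    fun x => Real.rpow_succ_bregman_nonneg hα (hf0 x) (hg0 x)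
  have hint : Integrable
      (fun x => g x ^ (α + 1) + α * f x ^ (α + 1) - (α + 1) * f x ^ α * g x) μ := by
    refine ((hg1.add (hf1.const_mul α)).sub (hfg.const_mul (α + 1))).congr
      (.of_forall fun x => ?_)
    simp only [Pi.add_apply, Pi.sub_apply, mul_assoc]
  have hαinv : 0 < 1 / α := one_div_pos.2 hα
  refine ⟨mul_nonneg hαinv.le (integral_nonneg hnonneg), ?_⟩
  rw [mul_eq_zero, or_iff_right hαinv.ne', integral_eq_zero_iff_of_nonneg hnonneg hint]
  refine Filter.eventually_congr (Filter.Eventually.of_forall fun x => ?_)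
  exact Real.rpow_succ_bregman_eq_zero_iff hα (hf0 x) (hg0 x)

/-- The density power divergence
`(1/α)∫[g^{α+1} + α f^{α+1} − (α+1) f^α g]` is nonnegative, with equality iff
`f = g` a.e. -/
theorem dpd_nonneg_iff
    {μ : Measure ℝ} {f g : ℝ → ℝ} {α : ℝ} (hα : 0 < α)
    (hf : Measurable f) (hg : Measurable g)
    (hf0 : ∀ x, 0 ≤ f x) (hg0 : ∀ x, 0 ≤ g x)
    (hfint : ∫ x, f x ∂μ = 1) (hgint : ∫ x, g x ∂μ = 1)
    (hfg : Integrable (fun x => f x ^ α * g x) μ)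
    (hf1 : Integrable (fun x => f x ^ (α + 1)) μ)
    (hg1 : Integrable (fun x => g x ^ (α + 1)) μ) :
    0 ≤ (1 / α) * ∫ x, (g x ^ (α + 1) + α * f x ^ (α + 1)
        - (α + 1) * f x ^ α * g x) ∂μ ∧
    ((1 / α) * ∫ x, (g x ^ (α + 1) + α * f x ^ (α + 1)
        - (α + 1) * f x ^ α * g x) ∂μ = 0 ↔ f =ᵐ[μ] g) :=
  dpd_nonneg_iff_general hα hf0 hg0 hfg hf1 hg1
end

section
/- For fixed positive densities f, g with ∫f^α g, ∫f^{α+1}, ∫g^{α+1} finite and positive, the LDPD tends to the Kullback–Leibler divergence as α → 0: lim_{α→0⁺} [log∫f^{α+1} − ((1+α)/α)log∫f^α g + (1/α)log∫g^{α+1}] = ∫ g log(g/f) dμ. -/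
open MeasureTheory Filter Topology Real

/-!
With `F α = ∫ f^(α+1)`, `J α = ∫ f^α g` and `I α = ∫ g^(α+1)`, the expression equals
`log F α - log J α + (log I α - log J α) / α`. Dominated convergence gives `F α → ∫ f = 1`,
`J α → ∫ g = 1` and `(I α - J α) / α = ∫ g (g^α - f^α) / α → ∫ g log (g / f)`; since
`log I - log J` lies between `(I - J) / I` and `(I - J) / J`, the last term has the same limit.

The dominating function `g² + g f + |g log (g / f)|` comes from `b^α - a^α ≤ α b^α log (b / a)`
where `a ≤ b ≤ 1`, and from Bernoulli's inequality for `b^α` where `b > 1`.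
-/

lemma rpow_le_one_add {x α : ℝ} (hx : 0 ≤ x) (hα0 : 0 ≤ α) (hα1 : α ≤ 1) : x ^ α ≤ 1 + x := by
  rcases le_total x 1 with h | h
  · linarith [rpow_le_one hx h hα0]
  · linarith [rpow_le_self_of_one_le h hα1]

lemma rpow_sub_rpow_le_mul_rpow_mul_log {a b : ℝ} (ha : 0 < a) (hb : 0 < b) (α : ℝ) :
    b ^ α - a ^ α ≤ α * b ^ α * log (b / a) := by
  have hbα : 0 < b ^ α := rpow_pos_of_pos hb α
  have h := log_le_sub_one_of_pos (rpow_pos_of_pos (div_pos ha hb) α)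
  rw [log_rpow (div_pos ha hb), div_rpow ha.le hb.le, log_div ha.ne' hb.ne'] at h
  rw [div_sub_one hbα.ne', le_div_iff₀ hbα] at h
  rw [log_div hb.ne' ha.ne']
  linarith

lemma rpow_sub_rpow_div_le {a b α : ℝ} (ha : 0 < a) (hab : a ≤ b) (hα : 0 < α) (hα1 : α ≤ 1) :
    (b ^ α - a ^ α) / α ≤ b + log (b / a) := by
  have hb : 0 < b := ha.trans_le hab
  have hlog : 0 ≤ log (b / a) := log_nonneg ((one_le_div ha).2 hab)
  rw [div_le_iff₀ hα]
  rcases le_total b 1 with hb1 | hb1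
  · have h := rpow_sub_rpow_le_mul_rpow_mul_log ha hb α
    have hbα : b ^ α ≤ 1 := rpow_le_one hb.le hb1 hα.le
    nlinarith [mul_le_mul_of_nonneg_left hbα (mul_nonneg hα.le hlog)]
  · have hbernoulli : b ^ α ≤ 1 + α * (b - 1) := by
      simpa using rpow_one_add_le_one_add_mul_self (s := b - 1) (by linarith) hα.le hα1
    have h := rpow_sub_rpow_le_mul_rpow_mul_log ha one_pos α
    have hmono : log (1 / a) ≤ log (b / a) :=
      log_le_log (by positivity) (div_le_div_of_nonneg_right hb1 ha.le)
    rw [one_rpow, mul_one] at h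
    nlinarith

lemma abs_rpow_sub_rpow_div_le {a b α : ℝ} (ha : 0 < a) (hb : 0 < b) (hα : 0 < α)
    (hα1 : α ≤ 1) : |(b ^ α - a ^ α) / α| ≤ max a b + |log (b / a)| := by
  wlog hab : a ≤ b generalizing a b
  · have h := this hb ha (le_of_not_ge hab)
    rw [← neg_sub, neg_div, abs_neg, max_comm] at h
    rwa [← inv_div b a, log_inv, abs_neg] at h
  have hnonneg : 0 ≤ (b ^ α - a ^ α) / α :=
    div_nonneg (sub_nonneg.2 (rpow_le_rpow ha.le hab hα.le)) hα.le
  rw [abs_of_nonneg hnonneg, max_eq_right hab]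
  linarith [rpow_sub_rpow_div_le ha hab hα hα1, le_abs_self (log (b / a))]

lemma tendsto_rpow_sub_rpow_div {a b : ℝ} (ha : 0 < a) (hb : 0 < b) :
    Tendsto (fun α : ℝ => (b ^ α - a ^ α) / α) (𝓝[≠] 0) (𝓝 (log (b / a))) := by
  have hderiv : HasDerivAt (fun α : ℝ => b ^ α - a ^ α) (log b - log a) 0 := by
    simpa using (hasStrictDerivAt_const_rpow hb 0).hasDerivAt.fun_sub
      (hasStrictDerivAt_const_rpow ha 0).hasDerivAt
  rw [log_div hb.ne' ha.ne']
  refine hderiv.tendsto_slope_zero.congr fun α => ?_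
  simp [div_eq_inv_mul]

section

variable {X : Type*} [MeasurableSpace X] {μ : Measure X}

lemma tendsto_integral_rpow_mul {f h : X → ℝ} (hf : AEMeasurable f μ) (hf0 : ∀ x, 0 < f x)
    (hh : Integrable h μ) (hfh : Integrable (fun x => f x * h x) μ) :
    Tendsto (fun α : ℝ => ∫ x, f x ^ α * h x ∂μ) (𝓝[>] 0) (𝓝 (∫ x, h x ∂μ)) := by
  refine tendsto_integral_filter_of_dominated_convergence (fun x => |h x| + |f x * h x|)
    (.of_forall fun α => ((hf.pow_const α).mul hh.aemeasurable).aestronglyMeasurable) ?_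
    (hh.abs.add hfh.abs) (.of_forall fun x => ?_)
  · filter_upwards [Ioc_mem_nhdsGT one_pos] with α hα
    refine .of_forall fun x => ?_
    have hfα := rpow_le_one_add (hf0 x).le hα.1.le hα.2
    rw [norm_mul, norm_of_nonneg (rpow_nonneg (hf0 x).le α), Real.norm_eq_abs, abs_mul,
      abs_of_pos (hf0 x)]
    nlinarith [abs_nonneg (h x)]
  · simpa using ((continuousAt_const_rpow (b := 0) (hf0 x).ne').tendsto.mono_left
      nhdsWithin_le_nhds).mul_const (h x)

lemma tendsto_integral_mul_rpow_sub_rpow_div {f g : X → ℝ} (hf : AEMeasurable f μ)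
    (hg : AEMeasurable g μ) (hf0 : ∀ x, 0 < f x) (hg0 : ∀ x, 0 < g x)
    (hgg : Integrable (fun x => g x * g x) μ) (hfg : Integrable (fun x => f x * g x) μ)
    (hkl : Integrable (fun x => g x * log (g x / f x)) μ) :
    Tendsto (fun α : ℝ => ∫ x, g x * ((g x ^ α - f x ^ α) / α) ∂μ) (𝓝[>] 0)
      (𝓝 (∫ x, g x * log (g x / f x) ∂μ)) := by
  refine tendsto_integral_filter_of_dominated_convergence
    (fun x => g x * g x + f x * g x + |g x * log (g x / f x)|)
    (.of_forall fun α => (hg.mul (((hg.pow_const α).sub (hf.pow_const α)).div_const α))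
      |>.aestronglyMeasurable) ?_ ((hgg.add hfg).add hkl.abs) (.of_forall fun x => ?_)
  · filter_upwards [Ioc_mem_nhdsGT one_pos] with α hα
    refine .of_forall fun x => ?_
    have hbound := abs_rpow_sub_rpow_div_le (hf0 x) (hg0 x) hα.1 hα.2
    have hmax : max (f x) (g x) ≤ f x + g x := max_le_add_of_nonneg (hf0 x).le (hg0 x).le
    rw [norm_mul, norm_of_nonneg (hg0 x).le, Real.norm_eq_abs, abs_mul, abs_of_pos (hg0 x)]
    nlinarith [hg0 x]
  · exact ((tendsto_rpow_sub_rpow_div (hf0 x) (hg0 x)).mono_left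
      (nhdsGT_le_nhdsNE 0)).const_mul (g x)

end

lemma tendsto_log_sub_log_div {I J : ℝ → ℝ} {c K : ℝ} (hc : c ≠ 0) (hI0 : ∀ α > 0, 0 < I α)
    (hJ0 : ∀ α > 0, 0 < J α) (hJ : Tendsto J (𝓝[>] 0) (𝓝 c))
    (hIJ : Tendsto (fun α => (I α - J α) / α) (𝓝[>] 0) (𝓝 K)) :
    Tendsto (fun α => (log (I α) - log (J α)) / α) (𝓝[>] 0) (𝓝 (K / c)) := by
  have hI : Tendsto I (𝓝[>] 0) (𝓝 c) := by
    have h := hJ.add ((tendsto_id.mono_left nhdsWithin_le_nhds).mul hIJ)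
    rw [zero_mul, add_zero] at h
    refine h.congr' ?_
    filter_upwards [self_mem_nhdsWithin] with α (hα : 0 < α)
    simp only [id]
    field_simp
    ring
  refine tendsto_of_tendsto_of_tendsto_of_le_of_le' (hIJ.div hI hc) (hIJ.div hJ hc) ?_ ?_ <;>
    filter_upwards [self_mem_nhdsWithin] with α (hα : 0 < α) <;>
    simp only [Pi.div_apply] <;>
    rw [div_div, mul_comm α, ← div_div] <;>
    refine div_le_div_of_nonneg_right ?_ hα.le
  · have h := one_sub_inv_le_log_of_pos (div_pos (hI0 α hα) (hJ0 α hα))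
    rwa [log_div (hI0 α hα).ne' (hJ0 α hα).ne', inv_div, one_sub_div (hI0 α hα).ne'] at h
  · have h := log_le_sub_one_of_pos (div_pos (hI0 α hα) (hJ0 α hα))
    rwa [log_div (hI0 α hα).ne' (hJ0 α hα).ne', div_sub_one (hJ0 α hα).ne'] at h

theorem ldpd_tendsto_kl_general
    {μ : Measure ℝ} {f g : ℝ → ℝ}
    (hf0 : ∀ x, 0 < f x) (hg0 : ∀ x, 0 < g x)
    (hfint : ∫ x, f x ∂μ = 1) (hgint : ∫ x, g x ∂μ = 1)
    (hfg : ∀ α > (0 : ℝ), Integrable (fun x => f x ^ α * g x) μ)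
    (hf1 : ∀ α > (0 : ℝ), Integrable (fun x => f x ^ (α + 1)) μ)
    (hg1 : ∀ α > (0 : ℝ), Integrable (fun x => g x ^ (α + 1)) μ)
    (hfgpos : ∀ α > (0 : ℝ), 0 < ∫ x, f x ^ α * g x ∂μ)
    (hg1pos : ∀ α > (0 : ℝ), 0 < ∫ x, g x ^ (α + 1) ∂μ)
    (hkl : Integrable (fun x => g x * Real.log (g x / f x)) μ) :
    Tendsto (fun α : ℝ =>
        Real.log (∫ x, f x ^ (α + 1) ∂μ)
          - ((1 + α) / α) * Real.log (∫ x, f x ^ α * g x ∂μ)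
          + (1 / α) * Real.log (∫ x, g x ^ (α + 1) ∂μ))
      (nhdsWithin 0 (Set.Ioi 0))
      (nhds (∫ x, g x * Real.log (g x / f x) ∂μ)) := by
  have hf : Integrable f μ := .of_integral_ne_zero (by simp [hfint])
  have hg : Integrable g μ := .of_integral_ne_zero (by simp [hgint])
  have hff : Integrable (fun x => f x * f x) μ := by
    simpa [one_add_one_eq_two, rpow_two, sq] using hf1 1 one_pos
  have hgg : Integrable (fun x => g x * g x) μ := by
    simpa [one_add_one_eq_two, rpow_two, sq] using hg1 1 one_pos
  have hfg1 : Integrable (fun x => f x * g x) μ := by simpa using hfg 1 one_pos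
  have hF : Tendsto (fun α : ℝ => ∫ x, f x ^ (α + 1) ∂μ) (𝓝[>] 0) (𝓝 1) := by
    have h := tendsto_integral_rpow_mul hf.aemeasurable hf0 hf hff
    rw [hfint] at h
    exact h.congr fun α => integral_congr_ae (.of_forall fun x => (rpow_add_one (hf0 x).ne' α).symm)
  have hJ : Tendsto (fun α : ℝ => ∫ x, f x ^ α * g x ∂μ) (𝓝[>] 0) (𝓝 1) :=
    hgint ▸ tendsto_integral_rpow_mul hf.aemeasurable hf0 hg hfg1
  have hIJ : Tendsto (fun α : ℝ => ((∫ x, g x ^ (α + 1) ∂μ) - ∫ x, f x ^ α * g x ∂μ) / α)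
      (𝓝[>] 0) (𝓝 (∫ x, g x * log (g x / f x) ∂μ)) := by
    refine (tendsto_integral_mul_rpow_sub_rpow_div hf.aemeasurable hg.aemeasurable hf0 hg0 hgg
      hfg1 hkl).congr' ?_
    filter_upwards [self_mem_nhdsWithin] with α (hα : 0 < α)
    rw [← integral_sub (hg1 α hα) (hfg α hα), ← integral_div]
    simp_rw [rpow_add_one (hg0 _).ne', mul_div_assoc', mul_sub, mul_comm (g _)]
  have hlog := tendsto_log_sub_log_div one_ne_zero hg1pos hfgpos hJ hIJ
  have h := ((hF.log one_ne_zero).sub (hJ.log one_ne_zero)).add hlog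
  rw [log_one, sub_zero, zero_add, div_one] at h
  refine h.congr' ?_
  filter_upwards [self_mem_nhdsWithin] with α (hα : 0 < α)
  field_simp
  ring

/-- The LDPD tends to the Kullback–Leibler divergence as `α → 0⁺`. -/
theorem ldpd_tendsto_kl
    {μ : Measure ℝ} {f g : ℝ → ℝ}
    (hf : Measurable f) (hg : Measurable g)
    (hf0 : ∀ x, 0 < f x) (hg0 : ∀ x, 0 < g x)
    (hfint : ∫ x, f x ∂μ = 1) (hgint : ∫ x, g x ∂μ = 1)
    (hfg : ∀ α > (0 : ℝ), Integrable (fun x => f x ^ α * g x) μ)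
    (hf1 : ∀ α > (0 : ℝ), Integrable (fun x => f x ^ (α + 1)) μ)
    (hg1 : ∀ α > (0 : ℝ), Integrable (fun x => g x ^ (α + 1)) μ)
    (hfgpos : ∀ α > (0 : ℝ), 0 < ∫ x, f x ^ α * g x ∂μ)
    (hf1pos : ∀ α > (0 : ℝ), 0 < ∫ x, f x ^ (α + 1) ∂μ)
    (hg1pos : ∀ α > (0 : ℝ), 0 < ∫ x, g x ^ (α + 1) ∂μ)
    (hkl : Integrable (fun x => g x * Real.log (g x / f x)) μ) :
    Tendsto (fun α : ℝ =>
        Real.log (∫ x, f x ^ (α + 1) ∂μ)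
          - ((1 + α) / α) * Real.log (∫ x, f x ^ α * g x ∂μ)
          + (1 / α) * Real.log (∫ x, g x ^ (α + 1) ∂μ))
      (nhdsWithin 0 (Set.Ioi 0))
      (nhds (∫ x, g x * Real.log (g x / f x) ∂μ)) :=
  ldpd_tendsto_kl_general hf0 hg0 hfint hgint hfg hf1 hg1 hfgpos hg1pos hkl
end

section
/- For fixed positive densities f, g, the DPD tends to the Kullback–Leibler divergence as α → 0: lim_{α→0⁺} ∫[f^{α+1} − (1 + 1/α) f^α g + (1/α) g^{α+1}] dμ = ∫ g log(g/f) dμ. -/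
/-!
Write the integrand as `f^α (f - g) + g (g^α - f^α) / α`. Pointwise it tends to
`f - g + g log (g / f)`, the second term being a difference quotient of `α ↦ g^α - f^α` at `0`.
For `α ∈ (0, 1]` it is dominated by `(1 + f + g)(f + g) + |g log (g / f)|`: split the exponents
`α log g`, `α log f` at `0`; on the negative half-line exp is `1`-Lipschitz, which yields the
`|log (g / f)|` term, and on the positive one convexity gives `exp (α t) - 1 ≤ α (exp t - 1)`.
Dominated convergence and `∫ f = ∫ g = 1` conclude.
-/

open MeasureTheory Filter Real Topology

lemma abs_exp_sub_exp_le_of_nonpos {x y : ℝ} (hx : x ≤ 0) (hy : y ≤ 0) :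
    |exp x - exp y| ≤ |x - y| := by
  wlog hyx : y ≤ x generalizing x y
  · rw [abs_sub_comm, abs_sub_comm x]
    exact this hy hx (le_of_not_ge hyx)
  have hexp : exp y = exp x * exp (y - x) := by rw [← exp_add, add_sub_cancel]
  rw [abs_of_nonneg (sub_nonneg.mpr (exp_le_exp.mpr hyx)), abs_of_nonneg (sub_nonneg.mpr hyx),
    hexp]
  nlinarith [add_one_le_exp (y - x), exp_le_one_iff.mpr hx, exp_pos x]

lemma exp_mul_sub_one_le {α : ℝ} (hα0 : 0 ≤ α) (hα1 : α ≤ 1) (x : ℝ) :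
    exp (α * x) - 1 ≤ α * (exp x - 1) := by
  have h := convexOn_exp.2 (Set.mem_univ x) (Set.mem_univ 0) hα0 (sub_nonneg.mpr hα1)
    (add_sub_cancel α 1)
  simp only [smul_eq_mul, mul_zero, add_zero, exp_zero, mul_one] at h
  linarith

lemma abs_exp_mul_sub_exp_mul_le {α : ℝ} (hα0 : 0 ≤ α) (hα1 : α ≤ 1) (a b : ℝ) :
    |exp (α * a) - exp (α * b)| ≤ α * (|a - b| + exp a + exp b) := by
  have split : ∀ x, exp (α * x) = exp (α * min x 0) + (exp (α * max x 0) - 1) := by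
    intro x
    rcases le_total x 0 with h | h <;> simp [h]
  have neg : |exp (α * min a 0) - exp (α * min b 0)| ≤ α * |a - b| := calc
    _ ≤ |α * min a 0 - α * min b 0| :=
      abs_exp_sub_exp_le_of_nonpos (mul_nonpos_of_nonneg_of_nonpos hα0 (min_le_right _ _))
        (mul_nonpos_of_nonneg_of_nonpos hα0 (min_le_right _ _))
    _ = α * |min a 0 - min b 0| := by rw [← mul_sub, abs_mul, abs_of_nonneg hα0]
    _ ≤ α * |a - b| :=
      mul_le_mul_of_nonneg_left ((abs_min_sub_min_le_max a 0 b 0).trans_eq (by simp)) hα0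
  have pos : ∀ x, 0 ≤ exp (α * max x 0) - 1 ∧ exp (α * max x 0) - 1 ≤ α * exp x := by
    intro x
    refine ⟨sub_nonneg.mpr (one_le_exp (mul_nonneg hα0 (le_max_right x 0))), ?_⟩
    have hmax : exp (max x 0) ≤ exp x + 1 := by
      rcases le_total x 0 with h | h <;> simp [h, (exp_pos x).le]
    nlinarith [exp_mul_sub_one_le hα0 hα1 (max x 0)]
  obtain ⟨hneg_lo, hneg_hi⟩ := abs_le.mp neg
  obtain ⟨ha_lo, ha_hi⟩ := pos a
  obtain ⟨hb_lo, hb_hi⟩ := pos b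
  rw [split a, split b, abs_le]
  constructor <;> linarith

lemma abs_rpow_sub_rpow_le {α F G : ℝ} (hα0 : 0 ≤ α) (hα1 : α ≤ 1) (hF : 0 < F) (hG : 0 < G) :
    |G ^ α - F ^ α| ≤ α * (|log (G / F)| + G + F) := by
  simpa [rpow_def_of_pos hF, rpow_def_of_pos hG, log_div hG.ne' hF.ne', exp_log hF, exp_log hG,
    mul_comm] using abs_exp_mul_sub_exp_mul_le hα0 hα1 (log G) (log F)

/-- Integrand of the density power divergence `d_α(g, f)`, with model density `F` and true
density `G`. -/
noncomputable def dpdIntegrand (α F G : ℝ) : ℝ :=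
  F ^ (α + 1) - (1 + 1 / α) * F ^ α * G + (1 / α) * G ^ (α + 1)

lemma dpdIntegrand_eq {α F G : ℝ} (hα : α ≠ 0) (hF : 0 < F) (hG : 0 < G) :
    dpdIntegrand α F G = F ^ α * (F - G) + G * ((G ^ α - F ^ α) / α) := by
  rw [dpdIntegrand, rpow_add hF, rpow_add hG, rpow_one, rpow_one]
  field_simp
  ring

lemma abs_dpdIntegrand_le {α F G : ℝ} (hα0 : 0 < α) (hα1 : α ≤ 1) (hF : 0 < F) (hG : 0 < G) :
    |dpdIntegrand α F G| ≤ (1 + F + G) * (F + G) + |G * log (G / F)| := by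
  have hpow : F ^ α ≤ 1 + F := by
    have := rpow_one_add_le_one_add_mul_self (s := F - 1) (by linarith) hα0.le hα1
    rw [add_sub_cancel] at this
    nlinarith
  have hfirst : |F ^ α * (F - G)| ≤ (1 + F) * (F + G) := by
    rw [abs_mul, abs_of_pos (rpow_pos_of_pos hF α)]
    exact mul_le_mul hpow ((abs_sub _ _).trans (by rw [abs_of_pos hF, abs_of_pos hG]))
      (abs_nonneg _) (by linarith)
  have hsecond : |G * ((G ^ α - F ^ α) / α)| ≤ G * (|log (G / F)| + G + F) := by
    rw [abs_mul, abs_of_pos hG, abs_div, abs_of_pos hα0]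
    gcongr
    rw [div_le_iff₀ hα0, mul_comm]
    exact abs_rpow_sub_rpow_le hα0.le hα1 hF hG
  rw [dpdIntegrand_eq hα0.ne' hF hG, abs_mul G, abs_of_pos hG]
  calc _ ≤ _ := abs_add_le _ _
    _ ≤ _ := add_le_add hfirst hsecond
    _ = _ := by ring

lemma tendsto_dpdIntegrand {F G : ℝ} (hF : 0 < F) (hG : 0 < G) :
    Tendsto (fun α => dpdIntegrand α F G) (𝓝[>] 0) (𝓝 (F - G + G * log (G / F))) := by
  have hpow : Tendsto (fun α : ℝ => F ^ α) (𝓝[>] 0) (𝓝 1) := by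
    have h := (continuousAt_const_rpow hF.ne' (b := 0)).tendsto
    rw [rpow_zero] at h
    exact h.mono_left nhdsWithin_le_nhds
  have hderiv : HasDerivAt (fun α : ℝ => G ^ α - F ^ α) (log (G / F)) 0 := by
    simpa [log_div hG.ne' hF.ne'] using (hasStrictDerivAt_const_rpow hG 0).hasDerivAt.fun_sub
      (hasStrictDerivAt_const_rpow hF 0).hasDerivAt
  have hquot : Tendsto (fun α : ℝ => (G ^ α - F ^ α) / α) (𝓝[>] 0) (𝓝 (log (G / F))) := by
    simpa [div_eq_inv_mul] using hderiv.tendsto_slope_zero_right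
  have hlim := (hpow.mul_const (F - G)).add (hquot.const_mul G)
  rw [one_mul] at hlim
  refine hlim.congr' ?_
  filter_upwards [self_mem_nhdsWithin] with α (hα : 0 < α)
  exact (dpdIntegrand_eq hα.ne' hF hG).symm

theorem dpd_tendsto_kl_general
    {μ : Measure ℝ} {f g : ℝ → ℝ}
    (hf0 : ∀ x, 0 < f x) (hg0 : ∀ x, 0 < g x)
    (hfint : ∫ x, f x ∂μ = 1) (hgint : ∫ x, g x ∂μ = 1)
    (hfg : ∀ α > (0 : ℝ), Integrable (fun x => f x ^ α * g x) μ)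
    (hf1 : ∀ α > (0 : ℝ), Integrable (fun x => f x ^ (α + 1)) μ)
    (hg1 : ∀ α > (0 : ℝ), Integrable (fun x => g x ^ (α + 1)) μ)
    (hkl : Integrable (fun x => g x * Real.log (g x / f x)) μ) :
    Tendsto (fun α : ℝ =>
        ∫ x, (f x ^ (α + 1) - (1 + 1 / α) * f x ^ α * g x
          + (1 / α) * g x ^ (α + 1)) ∂μ)
      (nhdsWithin 0 (Set.Ioi 0))
      (nhds (∫ x, g x * Real.log (g x / f x) ∂μ)) := by
  have hfi : Integrable f μ := .of_integral_ne_zero (by simp [hfint])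
  have hgi : Integrable g μ := .of_integral_ne_zero (by simp [hgint])
  have hint : ∀ α > (0 : ℝ), Integrable (fun x => dpdIntegrand α (f x) (g x)) μ := fun α hα => by
    simpa only [dpdIntegrand, mul_assoc] using
      ((hf1 α hα).sub' ((hfg α hα).const_mul (1 + 1 / α))).fun_add ((hg1 α hα).const_mul (1 / α))
  have hbound : Integrable
      (fun x => (1 + f x + g x) * (f x + g x) + |g x * log (g x / f x)|) μ := by
    have hsq := ((hf1 1 one_pos).fun_add ((hfg 1 one_pos).const_mul 2)).fun_add (hg1 1 one_pos)
    refine (((hfi.fun_add hgi).fun_add hsq).fun_add hkl.abs).congr (ae_of_all _ fun x => ?_)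
    simp only [one_add_one_eq_two, rpow_two, rpow_one]
    ring
  have hlim := tendsto_integral_filter_of_dominated_convergence (l := 𝓝[>] (0 : ℝ)) _
    (eventually_mem_nhdsWithin.mono fun α hα => (hint α hα).aestronglyMeasurable)
    (eventually_of_mem (Ioc_mem_nhdsGT zero_lt_one) fun α hα =>
      ae_of_all _ fun x => abs_dpdIntegrand_le hα.1 hα.2 (hf0 x) (hg0 x))
    hbound (ae_of_all _ fun x => tendsto_dpdIntegrand (hf0 x) (hg0 x))
  rwa [integral_add (hfi.sub' hgi) hkl, integral_sub hfi hgi, hfint, hgint, sub_self, zero_add]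
    at hlim

/-- The DPD tends to the Kullback–Leibler divergence as `α → 0⁺`. -/
theorem dpd_tendsto_kl
    {μ : Measure ℝ} {f g : ℝ → ℝ}
    (hf : Measurable f) (hg : Measurable g)
    (hf0 : ∀ x, 0 < f x) (hg0 : ∀ x, 0 < g x)
    (hfint : ∫ x, f x ∂μ = 1) (hgint : ∫ x, g x ∂μ = 1)
    (hfg : ∀ α > (0 : ℝ), Integrable (fun x => f x ^ α * g x) μ)
    (hf1 : ∀ α > (0 : ℝ), Integrable (fun x => f x ^ (α + 1)) μ)
    (hg1 : ∀ α > (0 : ℝ), Integrable (fun x => g x ^ (α + 1)) μ)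
    (hkl : Integrable (fun x => g x * Real.log (g x / f x)) μ) :
    Tendsto (fun α : ℝ =>
        ∫ x, (f x ^ (α + 1) - (1 + 1 / α) * f x ^ α * g x
          + (1 / α) * g x ^ (α + 1)) ∂μ)
      (nhdsWithin 0 (Set.Ioi 0))
      (nhds (∫ x, g x * Real.log (g x / f x) ∂μ)) :=
  dpd_tendsto_kl_general hf0 hg0 hfint hgint hfg hf1 hg1 hkl
end
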